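/- arXiv:1709.06142 — 6 statements merged into one kernel-verified Lean document; each statement's English description precedes it below -/
import Mathlib

section
/- Let K ≥ 2 and N ≥ 1 be coprime integers and let b = (b_1,…,b_K) be an ordered K-partition of N. Set μ = (K/(K+N))·‖Bb‖² and c_eff = K − 1 − (12K/(K+N))·‖P_{𝟙⊥}ψ(b) − (N/K)ρ‖², where ‖·‖ is the Euclidean norm on ℝ^K. Then μ = (1/12)(K − 1 − c_eff). -/
open scoped BigOperators

/-- The K×K matrix B with B_{ij} = (1/(2K))(−(K−1) + 2·((j−i) mod K)). -/
noncomputable def Bmat (K : ℕ) : Matrix (Fin K) (Fin K) ℝ :=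
  Matrix.of fun i j => (1 / (2 * (K : ℝ))) * (-((K : ℝ) - 1) + 2 * (((j - i : Fin K) : ℕ) : ℝ))

/-- The all-ones K×K matrix. -/
noncomputable def Jmat (K : ℕ) : Matrix (Fin K) (Fin K) ℝ := Matrix.of fun _ _ => 1

/-- Orthogonal projection onto the hyperplane orthogonal to (1,…,1). -/
noncomputable def Pperp (K : ℕ) : Matrix (Fin K) (Fin K) ℝ := 1 - ((K : ℝ))⁻¹ • Jmat K

/-- ψ(b) with i-th entry N − (b_1 + ⋯ + b_i)  (0-indexed). -/
noncomputable def psiVec (K N : ℕ) (b : Fin K → ℕ) : Fin K → ℝ :=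
  fun i => (N : ℝ) - ∑ j ∈ Finset.Iic i, (b j : ℝ)

/-- ρ = (1/2)(K−1, K−3, …, 1−K). -/
noncomputable def rhoVec (K : ℕ) : Fin K → ℝ := fun i => ((K : ℝ) - 1 - 2 * (i : ℕ)) / 2

/-! All quantities are linear in `b`. With `U` the strictly upper triangular all-ones matrix,
`ψ(b) = U b`, and the vector `P ψ(b) - (N/K) ρ` equals `-(B + P) b`. Unfolding `(j - i) mod K`
shows `B + Bᵀ = -P`, and the columns of `B` sum to zero, so `P B = B`. As `P` is a symmetric
idempotent, `(B + P)ᵀ (B + P) = Bᵀ B + (Bᵀ + B + P) = Bᵀ B`: the two squared norms coincide,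
and the relation between `μ` and `c_eff` is arithmetic. -/

theorem Fin.cast_val_sub {R : Type*} [Ring R] {n : ℕ} (a b : Fin n) :
    (((a - b : Fin n) : ℕ) : R) = (a : ℕ) - (b : ℕ) + if a < b then (n : R) else 0 := by
  split_ifs with h
  · rw [Fin.coe_sub_iff_lt.mpr h, Nat.cast_sub (by omega)]
    push_cast
    abel
  · rw [Fin.coe_sub_iff_le.mpr (not_lt.mp h), Nat.cast_sub (not_lt.mp h), add_zero]

theorem Fin.sum_cast_val_mul_two (n : ℕ) : (∑ i : Fin n, ((i : ℕ) : ℝ)) * 2 = n * (n - 1) := by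
  rw [Fin.sum_univ_eq_sum_range (fun i => (i : ℝ))]
  rcases n with _ | n
  · simp
  · have h := congrArg (Nat.cast : ℕ → ℝ) (Finset.sum_range_id_mul_two (n + 1))
    push_cast at h ⊢
    linear_combination h

open Matrix

section General

variable {n R : Type*} [Fintype n] [CommRing R]

theorem transpose_mul_self_add_eq {A P : Matrix n n R} (hPt : Pᵀ = P) (hPP : P * P = P)
    (hPA : P * A = A) (hAP : A + Aᵀ = -P) : (A + P)ᵀ * (A + P) = Aᵀ * A := by
  have hAtP : Aᵀ * P = Aᵀ := by rw [← hPt, ← transpose_mul, hPA]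
  have hcancel : Aᵀ + (A + P) = 0 := by rw [← add_assoc, add_comm Aᵀ A, hAP, neg_add_cancel]
  rw [transpose_add, hPt, add_mul, mul_add, mul_add, hAtP, hPA, hPP, add_assoc, hcancel,
    add_zero]

theorem sum_sq_mulVec_eq_dotProduct (M : Matrix n n R) (v : n → R) :
    ∑ i, (M *ᵥ v) i ^ 2 = v ⬝ᵥ ((Mᵀ * M) *ᵥ v) := by
  rw [← mulVec_mulVec, dotProduct_mulVec, vecMul_transpose]
  simp only [dotProduct, sq]

end General

section

variable (K : ℕ)

theorem Pperp_transpose : (Pperp K)ᵀ = Pperp K := by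
  ext i j
  simp [Pperp, Jmat, one_apply, eq_comm]

theorem Pperp_mul_apply (M : Matrix (Fin K) (Fin K) ℝ) (i l : Fin K) :
    (Pperp K * M) i l = M i l - (K : ℝ)⁻¹ * ∑ j, M j l := by
  rw [Pperp, sub_mul, Matrix.one_mul, Matrix.smul_mul]
  simp [Jmat, mul_apply, Finset.mul_sum]

theorem Pperp_mul_of_sum_col_eq_zero {M : Matrix (Fin K) (Fin K) ℝ}
    (hM : ∀ l, ∑ j, M j l = 0) : Pperp K * M = M := by
  ext i l
  rw [Pperp_mul_apply, hM, mul_zero, sub_zero]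

def strictUpperOnes : Matrix (Fin K) (Fin K) ℝ := of fun i l => if i < l then 1 else 0

theorem psiVec_eq_mulVec {N : ℕ} {b : Fin K → ℕ} (hb : ∑ i, b i = N) :
    psiVec K N b = strictUpperOnes K *ᵥ fun j => (b j : ℝ) := by
  subst hb
  ext i
  rw [psiVec, Nat.cast_sum, ← Finset.sum_filter_add_sum_filter_not Finset.univ (· ≤ i),
    Finset.filter_ge_eq_Iic, add_sub_cancel_left]
  simp [strictUpperOnes, mulVec, dotProduct, Finset.sum_filter]

variable [NeZero K]

theorem sum_col_Pperp (l : Fin K) : ∑ j, Pperp K j l = 0 := by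
  simp [Pperp, Jmat, one_apply]

theorem Pperp_mul_self : Pperp K * Pperp K = Pperp K :=
  Pperp_mul_of_sum_col_eq_zero K (sum_col_Pperp K)

theorem sum_col_Bmat (l : Fin K) : ∑ i, Bmat K i l = 0 := by
  have hK : (K : ℝ) ≠ 0 := NeZero.ne _
  have hsub : ∑ i, (((l - i : Fin K) : ℕ) : ℝ) = ∑ k : Fin K, ((k : ℕ) : ℝ) :=
    Fintype.sum_equiv (Equiv.subLeft l) _ _ fun _ => rfl
  have hgauss := Fin.sum_cast_val_mul_two K
  simp only [Bmat, of_apply, ← Finset.mul_sum, Finset.sum_add_distrib, Finset.sum_const,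
    Finset.card_univ, Fintype.card_fin, nsmul_eq_mul, hsub]
  field_simp
  linear_combination hgauss

theorem Bmat_add_transpose : Bmat K + (Bmat K)ᵀ = -Pperp K := by
  have hK : (K : ℝ) ≠ 0 := NeZero.ne _
  ext i j
  simp only [Matrix.add_apply, transpose_apply, Matrix.neg_apply, Bmat, Pperp, Jmat, of_apply,
    Matrix.sub_apply, one_apply, Matrix.smul_apply, smul_eq_mul, Fin.cast_val_sub]
  rcases lt_trichotomy i j with h | rfl | h
  · simp only [h, h.ne, h.not_gt, ↓reduceIte]
    field_simp
    ring
  · simp only [lt_self_iff_false, ↓reduceIte]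
    field_simp
    ring
  · simp only [h, h.ne', h.not_gt, ↓reduceIte]
    field_simp
    ring

theorem Pperp_mul_strictUpperOnes_apply (i l : Fin K) :
    (Pperp K * strictUpperOnes K) i l = -(Bmat K + Pperp K) i l + rhoVec K i / K := by
  have hK : (K : ℝ) ≠ 0 := NeZero.ne _
  have hcol : ∑ j, strictUpperOnes K j l = (l : ℕ) := by
    simp [strictUpperOnes, Finset.sum_boole, Finset.filter_gt_eq_Iio]
  rw [Pperp_mul_apply, hcol]
  simp only [strictUpperOnes, Matrix.add_apply, Bmat, Pperp, Jmat, of_apply,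
    Matrix.sub_apply, one_apply, Matrix.smul_apply, smul_eq_mul, Fin.cast_val_sub, rhoVec]
  rcases lt_trichotomy i l with h | rfl | h
  · simp only [h, h.ne, h.not_gt, ↓reduceIte]
    field_simp
    ring
  · simp only [lt_self_iff_false, ↓reduceIte]
    field_simp
    ring
  · simp only [h, h.ne', h.not_gt, ↓reduceIte]
    field_simp
    ring

theorem Pperp_mulVec_psiVec_sub_eq {N : ℕ} {b : Fin K → ℕ} (hb : ∑ i, b i = N) (i : Fin K) :
    (Pperp K *ᵥ psiVec K N b) i - (N / K : ℝ) * rhoVec K i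
      = (-(Bmat K + Pperp K) *ᵥ fun j => (b j : ℝ)) i := by
  subst hb
  rw [psiVec_eq_mulVec K rfl, mulVec_mulVec, Nat.cast_sum]
  simp only [mulVec, dotProduct, Pperp_mul_strictUpperOnes_apply, add_mul, Finset.sum_add_distrib,
    ← Finset.mul_sum, Matrix.neg_apply, neg_mul]
  ring

theorem sum_sq_Pperp_mulVec_psiVec_sub {N : ℕ} {b : Fin K → ℕ} (hb : ∑ i, b i = N) :
    ∑ i, ((Pperp K *ᵥ psiVec K N b) i - (N / K : ℝ) * rhoVec K i) ^ 2
      = ∑ i, (Bmat K *ᵥ fun j => (b j : ℝ)) i ^ 2 := by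
  have hgram : (Bmat K + Pperp K)ᵀ * (Bmat K + Pperp K) = (Bmat K)ᵀ * Bmat K :=
    transpose_mul_self_add_eq (Pperp_transpose K) (Pperp_mul_self K)
      (Pperp_mul_of_sum_col_eq_zero K (sum_col_Bmat K)) (Bmat_add_transpose K)
  simp only [Pperp_mulVec_psiVec_sub_eq K hb, sum_sq_mulVec_eq_dotProduct, transpose_neg,
    neg_mul_neg, hgram]

end

theorem mu_eq_ceff_relation_general (K N : ℕ) (hK : 2 ≤ K)
    (b : Fin K → ℕ) (hb : ∑ i, b i = N)
    (μ ceff : ℝ)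
    (hμ : μ = ((K : ℝ) / (K + N)) *
      ∑ i, ((Bmat K).mulVec (fun j => (b j : ℝ)) i) ^ 2)
    (hceff : ceff = (K : ℝ) - 1 - (12 * (K : ℝ) / (K + N)) *
      ∑ i, ((Pperp K).mulVec (psiVec K N b) i - ((N : ℝ) / K) * rhoVec K i) ^ 2) :
    μ = (1 / 12) * ((K : ℝ) - 1 - ceff) := by
  have : NeZero K := ⟨by omega⟩
  rw [hμ, hceff, sum_sq_Pperp_mulVec_psiVec_sub K hb]
  ring

theorem mu_eq_ceff_relation (K N : ℕ) (hK : 2 ≤ K) (hN : 1 ≤ N)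
    (hcop : Nat.Coprime K N) (b : Fin K → ℕ) (hb : ∑ i, b i = N)
    (μ ceff : ℝ)
    (hμ : μ = ((K : ℝ) / (K + N)) *
      ∑ i, ((Bmat K).mulVec (fun j => (b j : ℝ)) i) ^ 2)
    (hceff : ceff = (K : ℝ) - 1 - (12 * (K : ℝ) / (K + N)) *
      ∑ i, ((Pperp K).mulVec (psiVec K N b) i - ((N : ℝ) / K) * rhoVec K i) ^ 2) :
    μ = (1 / 12) * ((K : ℝ) - 1 - ceff) :=
  mu_eq_ceff_relation_general K N hK b hb μ ceff hμ hceff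
end

section
/- Let K ≥ 2 and N ≥ 1 be coprime integers. Let P_2, …, P_K ∈ ℂ[z] be polynomials such that, for each i with 2 ≤ i ≤ K, either P_i = 0 or K·deg(P_i) < N(i−1) (equivalently deg P_i ≤ N(i−1)/K − 1). Then the polynomial λ^K − z^N + ∑_{i=2}^{K} P_i(z)·λ^{K−i}, regarded as a polynomial in the variable λ with coefficients in ℂ[z], is irreducible in ℂ[z][λ]. -/
/-!
Give `z` weight `K` and `λ` weight `N`. The degree condition on the `P i` makes the top
weighted-homogeneous part of the polynomial equal to `λ ^ K - z ^ N`. Top parts are multiplicative,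
and the top part of a factor has `λ`-degree at most that of the factor, so a factorisation into
monic factors of positive `λ`-degree would factor `λ ^ K - z ^ N` nontrivially. That is impossible
when `K` and `N` are coprime: all roots of a monic factor of `λ`-degree `g` are `K`-th roots
of `z ^ N`, so its constant term `c` satisfies `c ^ K = ± z ^ (N * g)`, whence `K ∣ N * g` and
`K ∣ g`.
-/

open Polynomial

namespace Polynomial

section RootsOfXPowSubC

variable {R : Type*} [CommRing R] [IsDomain R] {G : R[X]} {n : ℕ} {a : R}

theorem Splits.coeff_zero_pow_of_dvd_X_pow_sub_C (hs : G.Splits) (hG : G.Monic)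
    (hdvd : G ∣ X ^ n - C a) : G.coeff 0 ^ n = ((-1) ^ n * a) ^ G.natDegree := by
  have hroots : ∀ r ∈ G.roots, r ^ n = a := fun r hr => by
    have hr' : G.eval r = 0 := (mem_roots hG.ne_zero).1 hr
    simpa [hr', sub_eq_zero] using eval_dvd (x := r) hdvd
  have hprod : G.roots.prod ^ n = a ^ G.natDegree := by
    rw [← Multiset.map_id' G.roots, ← Multiset.prod_map_pow, Multiset.map_congr rfl hroots,
      Multiset.map_const', Multiset.prod_replicate, ← hs.natDegree_eq_card_roots]
  rw [hs.coeff_zero_eq_prod_roots_of_monic hG, mul_pow, hprod, ← pow_mul, mul_comm G.natDegree n,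
    pow_mul, mul_pow]

theorem Monic.coeff_zero_pow_of_dvd_X_pow_sub_C (hG : G.Monic) (hdvd : G ∣ X ^ n - C a) :
    G.coeff 0 ^ n = ((-1) ^ n * a) ^ G.natDegree := by
  set ι : R →+* AlgebraicClosure (FractionRing R) := algebraMap R _ with hι_def
  have hι : Function.Injective ι := by
    rw [hι_def, IsScalarTower.algebraMap_eq R (FractionRing R)]
    exact (algebraMap (FractionRing R) (AlgebraicClosure (FractionRing R))).injective.comp
      (IsFractionRing.injective R _)
  apply hι
  have hmap : G.map ι ∣ X ^ n - C (ι a) := by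
    simpa using Polynomial.map_dvd ι hdvd
  simpa [hG.natDegree_map, coeff_map] using
    (IsAlgClosed.splits (G.map ι)).coeff_zero_pow_of_dvd_X_pow_sub_C (hG.map ι) hmap

theorem Monic.dvd_mul_natDegree_of_dvd_X_pow_sub_C_X_pow {G : R[X][X]} {K N : ℕ} (hG : G.Monic)
    (hdvd : G ∣ X ^ K - C (X ^ N)) : K ∣ N * G.natDegree := by
  have h := congrArg natDegree (hG.coeff_zero_pow_of_dvd_X_pow_sub_C hdvd)
  have hsign : ((-1) ^ K * X ^ N : R[X]) = C ((-1) ^ K) * X ^ N := by simp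
  rw [hsign, Polynomial.natDegree_pow, Polynomial.natDegree_pow,
    natDegree_C_mul_X_pow _ _ (pow_ne_zero _ (neg_ne_zero.2 one_ne_zero))] at h
  exact ⟨(G.coeff 0).natDegree, by rw [mul_comm, ← h]⟩

theorem irreducible_X_pow_sub_C_X_pow {K N : ℕ} (hK : 0 < K) (hKN : K.Coprime N) :
    Irreducible (X ^ K - C (X ^ N) : R[X][X]) := by
  rw [(monic_X_pow_sub_C _ hK.ne').irreducible_iff_natDegree]
  refine ⟨fun h => ?_, fun G H hG hH hGH => ?_⟩
  · have := congrArg natDegree h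
    rw [natDegree_X_pow_sub_C, natDegree_one] at this
    omega
  have hsum : G.natDegree + H.natDegree = K := by
    rw [← hG.natDegree_mul hH, hGH, natDegree_X_pow_sub_C]
  have hdvdG : K ∣ G.natDegree :=
    hKN.dvd_of_dvd_mul_left (hG.dvd_mul_natDegree_of_dvd_X_pow_sub_C_X_pow ⟨H, hGH.symm⟩)
  have hdvdH : K ∣ H.natDegree :=
    hKN.dvd_of_dvd_mul_left
      (hH.dvd_mul_natDegree_of_dvd_X_pow_sub_C_X_pow ⟨G, by rw [← hGH, mul_comm]⟩)
  rcases Nat.eq_zero_or_pos G.natDegree with hG0 | hGpos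
  · exact Or.inl hG0
  · have := Nat.le_of_dvd hGpos hdvdG
    omega

end RootsOfXPowSubC

section WeightSubst

variable {R : Type*} [CommSemiring R]

-- In `R[X][X][X]` the innermost variable plays `z`, the middle one `λ` and the outer one `s`.
-- `scaleVar a` is `z ↦ z * s ^ a`, and `weightSubst a b` also sends `λ ↦ λ * s ^ b`, so the
-- `s`-degree of an image is the weighted degree and its leading coefficient the top part.
noncomputable def scaleVar (a : ℕ) : R[X] →+* R[X][X] :=
  eval₂RingHom (C.comp C) (C X * X ^ a)

noncomputable def weightSubst (a b : ℕ) : R[X][X] →+* R[X][X][X] :=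
  eval₂RingHom ((mapRingHom (C : R[X] →+* R[X][X])).comp (scaleVar a))
    (C X * X ^ b : R[X][X][X])

theorem scaleVar_X_pow (a n : ℕ) : scaleVar a (X ^ n : R[X]) = C (X ^ n) * X ^ (a * n) := by
  simp [scaleVar, mul_pow, pow_mul]

theorem natDegree_scaleVar_le (a : ℕ) (q : R[X]) :
    (scaleVar a q).natDegree ≤ a * q.natDegree := by
  have hcomp : scaleVar a q = (q.map C).comp (C X * X ^ a) := by
    rw [comp, eval₂_map]; rfl
  rw [hcomp, mul_comm a]
  exact natDegree_comp_le.trans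
    (Nat.mul_le_mul (natDegree_map_le) (natDegree_C_mul_X_pow_le _ _))

theorem weightSubst_C_mul_X_pow (a b : ℕ) (q : R[X]) (j : ℕ) :
    weightSubst a b (C q * X ^ j) = C (X ^ j) * ((scaleVar a q).map C * X ^ (b * j)) := by
  rw [map_mul, map_pow]
  simp only [weightSubst, coe_eval₂RingHom, eval₂_C, eval₂_X, RingHom.comp_apply, coe_mapRingHom]
  rw [C_pow, pow_mul]
  ring

theorem natDegree_weightSubst_C_mul_X_pow_le (a b : ℕ) (q : R[X]) (j : ℕ) :
    (weightSubst a b (C q * X ^ j)).natDegree ≤ a * q.natDegree + b * j := by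
  rw [weightSubst_C_mul_X_pow]
  exact (natDegree_C_mul_le _ _).trans (natDegree_mul_le.trans
    (add_le_add (natDegree_map_le.trans (natDegree_scaleVar_le a q)) (natDegree_X_pow_le _)))

theorem natDegree_coeff_weightSubst_le (a b : ℕ) (p : R[X][X]) (m : ℕ) :
    ((weightSubst a b p).coeff m).natDegree ≤ p.natDegree := by
  conv_lhs => rw [p.as_sum_range_C_mul_X_pow, map_sum, finsetSum_coeff]
  refine natDegree_sum_le_of_forall_le _ _ fun j hj => ?_
  rw [weightSubst_C_mul_X_pow, coeff_C_mul, coeff_mul_X_pow', coeff_map]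
  split_ifs
  · exact (natDegree_mul_C_le _ _).trans
      ((natDegree_X_pow_le j).trans (Nat.lt_succ_iff.1 (Finset.mem_range.1 hj)))
  · simp

end WeightSubst

section WeightSubstRing

variable {R : Type*} [CommRing R]

theorem weightSubst_X_pow_sub_C_X_pow {a b m n : ℕ} (h : a * n = b * m) :
    weightSubst a b (X ^ m - C (X ^ n) : R[X][X]) = C (X ^ m - C (X ^ n)) * X ^ (b * m) := by
  have hX : weightSubst a b (X ^ m : R[X][X]) = C (X ^ m) * X ^ (b * m) := by
    simpa using weightSubst_C_mul_X_pow a b (1 : R[X]) m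
  have hC : weightSubst a b (C (X ^ n) : R[X][X]) = C (C (X ^ n)) * X ^ (b * m) := by
    simpa [scaleVar_X_pow, h] using weightSubst_C_mul_X_pow a b (X ^ n : R[X]) 0
  rw [map_sub, hX, hC, C_sub]
  ring

theorem Monic.irreducible_of_irreducible_leadingCoeff_weightSubst [IsDomain R] {F : R[X][X]}
    (hF : F.Monic) (a b : ℕ)
    (hirr : Irreducible (weightSubst a b F).leadingCoeff)
    (hdeg : (weightSubst a b F).leadingCoeff.natDegree = F.natDegree) : Irreducible F := by
  rw [hF.irreducible_iff_natDegree]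
  refine ⟨fun h => ?_, fun G H hG hH hGH => ?_⟩
  · rw [h, map_one, leadingCoeff_one] at hirr
    exact not_irreducible_one hirr
  have hmul : (weightSubst a b G).leadingCoeff * (weightSubst a b H).leadingCoeff =
      (weightSubst a b F).leadingCoeff := by
    rw [← leadingCoeff_mul, ← map_mul, hGH]
  obtain ⟨hG0, hH0⟩ := mul_ne_zero_iff.1 (hmul ▸ hirr.ne_zero)
  have hsum : (weightSubst a b G).leadingCoeff.natDegree +
      (weightSubst a b H).leadingCoeff.natDegree = G.natDegree + H.natDegree := by
    rw [← Polynomial.natDegree_mul hG0 hH0, hmul, hdeg, ← hGH, hG.natDegree_mul hH]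
  have hleG : (weightSubst a b G).leadingCoeff.natDegree ≤ G.natDegree :=
    natDegree_coeff_weightSubst_le a b G _
  have hleH : (weightSubst a b H).leadingCoeff.natDegree ≤ H.natDegree :=
    natDegree_coeff_weightSubst_le a b H _
  rcases hirr.isUnit_or_isUnit hmul.symm with hu | hu
  · have := natDegree_eq_zero_of_isUnit hu
    omega
  · have := natDegree_eq_zero_of_isUnit hu
    omega

end WeightSubstRing

end Polynomial

noncomputable def spectralPoly {R : Type*} [CommRing R] (K N : ℕ) (P : ℕ → R[X]) : R[X][X] :=
  X ^ K - C (X ^ N) + ∑ i ∈ Finset.Icc 2 K, C (P i) * X ^ (K - i)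

section SpectralPoly

variable {R : Type*} [CommRing R] {K N : ℕ} {P : ℕ → R[X]}

theorem degree_sum_C_mul_X_pow_sub_lt (hK : 0 < K) :
    (∑ i ∈ Finset.Icc 2 K, C (P i) * X ^ (K - i)).degree < (K : WithBot ℕ) := by
  refine (degree_sum_le _ _).trans_lt ((Finset.sup_lt_iff (WithBot.bot_lt_coe K)).2 fun i hi => ?_)
  have hi : K - i < K := by
    have := (Finset.mem_Icc.1 hi).1
    omega
  exact (degree_C_mul_X_pow_le _ _).trans_lt (WithBot.coe_lt_coe.2 hi)

variable [Nontrivial R]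

theorem spectralPoly_monic (hK : 0 < K) : (spectralPoly K N P).Monic :=
  (monic_X_pow_sub_C _ hK.ne').add_of_left
    (by rw [degree_X_pow_sub_C hK]; exact degree_sum_C_mul_X_pow_sub_lt hK)

theorem natDegree_spectralPoly (hK : 0 < K) : (spectralPoly K N P).natDegree = K := by
  rw [spectralPoly, natDegree_add_eq_left_of_degree_lt, natDegree_X_pow_sub_C]
  simpa only [degree_X_pow_sub_C hK] using degree_sum_C_mul_X_pow_sub_lt hK

theorem leadingCoeff_weightSubst_spectralPoly (hK : 0 < K)
    (hdeg : ∀ i, 2 ≤ i → i ≤ K → P i = 0 ∨ K * (P i).natDegree < N * (i - 1)) :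
    (weightSubst K N (spectralPoly K N P)).leadingCoeff = X ^ K - C (X ^ N) := by
  have hW : (X ^ K - C (X ^ N) : R[X][X]) ≠ 0 := X_pow_sub_C_ne_zero hK _
  have htail : (weightSubst K N (∑ i ∈ Finset.Icc 2 K, C (P i) * X ^ (K - i))).degree
      < (N * K : ℕ) := by
    rw [map_sum]
    refine (degree_sum_le _ _).trans_lt
      ((Finset.sup_lt_iff (WithBot.bot_lt_coe _)).2 fun i hi => ?_)
    obtain ⟨h2i, hiK⟩ := Finset.mem_Icc.1 hi
    rcases hdeg i h2i hiK with h0 | hlt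
    · rw [h0, C_0, zero_mul, map_zero, degree_zero]
      exact WithBot.bot_lt_coe _
    · have hle := natDegree_weightSubst_C_mul_X_pow_le K N (P i) (K - i)
      have hweight : N * (i - 1) + N * (K - i) ≤ N * K := by
        rw [← Nat.mul_add]
        exact Nat.mul_le_mul_left _ (by omega)
      exact degree_le_natDegree.trans_lt (by exact_mod_cast (by omega : _ < N * K))
  rw [spectralPoly, map_add, weightSubst_X_pow_sub_C_X_pow (mul_comm K N),
    leadingCoeff_add_of_degree_lt', leadingCoeff_C_mul_X_pow]
  rwa [degree_C_mul_X_pow _ hW]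

end SpectralPoly

theorem spectral_poly_irreducible_general (K N : ℕ) (hK : 2 ≤ K)
    (hcop : Nat.Coprime K N) (P : ℕ → Polynomial ℂ)
    (hdeg : ∀ i, 2 ≤ i → i ≤ K → P i = 0 ∨ K * (P i).natDegree < N * (i - 1)) :
    Irreducible
      ((X : Polynomial (Polynomial ℂ)) ^ K - C (Polynomial.X ^ N)
        + ∑ i ∈ Finset.Icc 2 K, C (P i) * (X : Polynomial (Polynomial ℂ)) ^ (K - i)) := by
  have hK0 : 0 < K := by omega
  have hlc := leadingCoeff_weightSubst_spectralPoly hK0 hdeg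
  refine (spectralPoly_monic hK0).irreducible_of_irreducible_leadingCoeff_weightSubst K N ?_ ?_
  · rw [hlc]
    exact irreducible_X_pow_sub_C_X_pow hK0 hcop
  · rw [hlc, natDegree_X_pow_sub_C, natDegree_spectralPoly hK0]

theorem spectral_poly_irreducible (K N : ℕ) (hK : 2 ≤ K) (hN : 1 ≤ N)
    (hcop : Nat.Coprime K N) (P : ℕ → Polynomial ℂ)
    (hdeg : ∀ i, 2 ≤ i → i ≤ K → P i = 0 ∨ K * (P i).natDegree < N * (i - 1)) :
    Irreducible
      ((X : Polynomial (Polynomial ℂ)) ^ K - C (Polynomial.X ^ N)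
        + ∑ i ∈ Finset.Icc 2 K, C (P i) * (X : Polynomial (Polynomial ℂ)) ^ (K - i)) :=
  spectral_poly_irreducible_general K N hK hcop P hdeg
end

section
/- Let K ≥ 2 and N ≥ 1 be coprime integers, let b = (b_1,…,b_K) be an ordered K-partition of N, and let α = −Bb ∈ ℝ^K. For t ∈ ℂ let G_t be the K×K diagonal matrix with entries (G_t)_{ii} = exp(−tKα_i/(K+N)). Then for all t ∈ ℂ and all z ∈ ℂ: exp(tN/(K+N))·Φ_b(exp(−Kt/(K+N))·z) = G_t · Φ_b(z) · G_t^{−1}. (This is the statement that the Higgs bundle (ℰ_b, φ_b) is fixed by the ℂ^×-action (ℰ, φ) ↦ (ρ_t^*ℰ, e^t ρ_t^*φ) with ρ_t(z) = e^{−Kt/(K+N)}z.) -/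
open scoped BigOperators

/-- Cyclic successor on `Fin K`. -/
def cycSucc {K : ℕ} (i : Fin K) : Fin K := ⟨((i : ℕ) + 1) % K, Nat.mod_lt _ i.pos⟩

/-- The fixed-point Higgs field Φ_b(z). -/
def PhiB {K : ℕ} (b : Fin K → ℕ) (z : ℂ) : Matrix (Fin K) (Fin K) ℂ :=
  Matrix.of fun i j => if j = cycSucc i then z ^ (b i) else 0

/-!
Conjugating by a diagonal matrix `diag (exp f)` multiplies the `(i, i+1)` entry of `Φ_b` by
`exp (f i - f (i+1))`, and rescaling `z ↦ w z` multiplies it by `w ^ b i`. The identity therefore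
reduces to the exponent relation `K (α (i+1) - α i) = N - K b i`, which holds because consecutive
rows of `B` differ by `(1/K)(1,…,1) - eᵢ`.
-/

lemma cycSucc_eq_add_one {K : ℕ} [NeZero K] (i : Fin K) : cycSucc i = i + 1 := by
  ext
  simp [cycSucc, Fin.val_add]

lemma Fin.cast_val_sub_cast_val_sub_one {K : ℕ} [NeZero K] (a : Fin K) :
    ((a : ℕ) : ℝ) - ((a - 1 : Fin K) : ℕ) = 1 - if a = 0 then (K : ℝ) else 0 := by
  obtain ⟨n, rfl⟩ : ∃ n, K = n + 1 := Nat.exists_eq_add_one.mpr (NeZero.pos K)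
  rw [Fin.coe_sub_one]
  split_ifs with ha
  · simp [ha]
  · have : 1 ≤ (a : ℕ) := Nat.one_le_iff_ne_zero.mpr (Fin.val_ne_zero_iff.mpr ha)
    push_cast [this]
    ring

lemma Bmat_sub_Bmat_cycSucc {K : ℕ} [NeZero K] (i j : Fin K) :
    (K : ℝ) * (Bmat K i j - Bmat K (cycSucc i) j) = 1 - if j = i then (K : ℝ) else 0 := by
  have hsub : j - cycSucc i = j - i - 1 := by rw [cycSucc_eq_add_one, sub_add_eq_sub_sub]
  have hval := Fin.cast_val_sub_cast_val_sub_one (j - i)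
  simp only [sub_eq_zero] at hval
  rw [← hval]
  simp only [Bmat, Matrix.of_apply, hsub]
  field_simp [NeZero.ne K]
  ring

lemma Bmat_mulVec_sub_mulVec_cycSucc {K : ℕ} (v : Fin K → ℝ) (i : Fin K) :
    (K : ℝ) * ((Bmat K).mulVec v i - (Bmat K).mulVec v (cycSucc i)) = ∑ j, v j - K * v i := by
  have : NeZero K := NeZero.of_pos i.pos
  calc (K : ℝ) * ((Bmat K).mulVec v i - (Bmat K).mulVec v (cycSucc i))
      = ∑ j, (K : ℝ) * (Bmat K i j - Bmat K (cycSucc i) j) * v j := by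
        simp only [Matrix.mulVec, dotProduct, ← Finset.sum_sub_distrib, Finset.mul_sum]
        exact Finset.sum_congr rfl fun j _ => by ring
    _ = ∑ j, (v j - if j = i then (K : ℝ) * v j else 0) := by
        simp only [Bmat_sub_Bmat_cycSucc, sub_mul, one_mul, ite_mul, zero_mul]
    _ = ∑ j, v j - K * v i := by
        rw [Finset.sum_sub_distrib, Finset.sum_ite_eq' Finset.univ i, if_pos (Finset.mem_univ i)]

lemma PhiB_mul_apply {K : ℕ} (b : Fin K → ℕ) (w z : ℂ) (i j : Fin K) :
    PhiB b (w * z) i j = w ^ b i * PhiB b z i j := by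
  simp only [PhiB, Matrix.of_apply, mul_pow, mul_ite, mul_zero]

section DiagonalExp

open Matrix Complex

variable {n : Type*} [Fintype n] [DecidableEq n]

lemma inv_diagonal_exp (f : n → ℂ) :
    (diagonal fun i => exp (f i))⁻¹ = diagonal fun i => exp (-f i) :=
  inv_eq_right_inv <| by simp [diagonal_mul_diagonal, ← exp_add]

lemma diagonal_exp_mul_mul_inv_apply (f : n → ℂ) (M : Matrix n n ℂ) (i j : n) :
    (diagonal (fun i => exp (f i)) * M * (diagonal fun i => exp (f i))⁻¹) i j =
      exp (f i - f j) * M i j := by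
  rw [inv_diagonal_exp, mul_diagonal, diagonal_mul, sub_eq_add_neg, exp_add]
  ring

end DiagonalExp

theorem PhiB_fixed_point_general (K N : ℕ) (b : Fin K → ℕ) (hb : ∑ i, b i = N)
    (α : Fin K → ℝ) (hα : α = -(Bmat K).mulVec (fun j => (b j : ℝ)))
    (G : ℂ → Matrix (Fin K) (Fin K) ℂ)
    (hG : ∀ t, G t = Matrix.diagonal fun i =>
      Complex.exp (-(t * K * (α i : ℂ)) / ((K : ℂ) + N))) :
    ∀ t z : ℂ,
      Complex.exp (t * N / ((K : ℂ) + N)) •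
          PhiB b (Complex.exp (-((K : ℂ) * t) / ((K : ℂ) + N)) * z)
        = G t * PhiB b z * (G t)⁻¹ := by
  intro t z
  ext i j
  rw [hG, Matrix.smul_apply, diagonal_exp_mul_mul_inv_apply, PhiB_mul_apply, smul_eq_mul,
    ← mul_assoc]
  by_cases hj : j = cycSucc i
  · subst hj
    have hα_step : (K : ℝ) * (α (cycSucc i) - α i) = N - K * b i := by
      rw [hα, Pi.neg_apply, Pi.neg_apply, neg_sub_neg, Bmat_mulVec_sub_mulVec_cycSucc,
        ← Nat.cast_sum, hb]
    have hα_stepℂ : (K : ℂ) * (α (cycSucc i) - α i) = N - K * b i := by exact_mod_cast hα_step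
    rw [← Complex.exp_nat_mul, ← Complex.exp_add]
    congr 2
    linear_combination -(t / ((K : ℂ) + N)) * hα_stepℂ
  · simp [PhiB, hj]

theorem PhiB_fixed_point (K N : ℕ) (hK : 2 ≤ K) (hN : 1 ≤ N)
    (hcop : Nat.Coprime K N) (b : Fin K → ℕ) (hb : ∑ i, b i = N)
    (α : Fin K → ℝ) (hα : α = -(Bmat K).mulVec (fun j => (b j : ℝ)))
    (G : ℂ → Matrix (Fin K) (Fin K) ℂ)
    (hG : ∀ t, G t = Matrix.diagonal fun i =>
      Complex.exp (-(t * K * (α i : ℂ)) / ((K : ℂ) + N))) :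
    ∀ t z : ℂ,
      Complex.exp (t * N / ((K : ℂ) + N)) •
          PhiB b (Complex.exp (-((K : ℂ) * t) / ((K : ℂ) + N)) * z)
        = G t * PhiB b z * (G t)⁻¹ :=
  PhiB_fixed_point_general K N b hb α hα G hG
end

section
/- Let K ≥ 2 and suppose u_1,…,u_K : (0,∞) → ℝ are twice differentiable, satisfy the radial affine Toda system, satisfy ∑_{i=1}^K u_i(ρ) = 0 for all ρ > 0, and each u_i is bounded on [1,∞). Then the function F(ρ) = ∑_{i=1}^K u_i(ρ)² is nonincreasing on (0,∞) and F(ρ) → 0 as ρ → ∞. -/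
open scoped BigOperators

/-- Cyclic predecessor on `Fin K`. -/
def cycPred {K : ℕ} (i : Fin K) : Fin K := ⟨((i : ℕ) + (K - 1)) % K, Nat.mod_lt _ i.pos⟩

/-!
With `F = ∑ i, u i ^ 2`, the Toda system gives
`(ρ F')' = 2ρ ∑ i, (u i')² + 2ρ ∑ i, (u i - u (i+1)) (exp (u i - u (i+1)) - 1) ≥ 0`,
so `ρ F'` is nondecreasing. Were it positive somewhere, `F` would grow at least like a positive
multiple of `log ρ`, contradicting boundedness; hence `F' ≤ 0`. If `F` decreased to a positive
limit, the vectors `u(ρ)` would stay in a compact subset of the hyperplane `∑ i, x i = 0` avoiding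
`0`, where the pairing above is bounded below by some `δ > 0` (it vanishes only at constant
vectors). Then `ρ F'` would grow like `δ ρ²`, contradicting `ρ F' ≤ 0`.
-/

open Filter Set Topology Real

theorem cycSucc_eq_finRotate {K : ℕ} (i : Fin K) : cycSucc i = finRotate K i := by
  have := i.neZero
  ext
  simp [cycSucc, finRotate_apply, Fin.val_add]

theorem cycPred_eq_finRotate_symm {K : ℕ} (i : Fin K) : cycPred i = (finRotate K).symm i := by
  rw [Equiv.eq_symm_apply, ← cycSucc_eq_finRotate]
  ext
  simp only [cycSucc, cycPred, Nat.mod_add_mod]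
  have := i.pos
  rw [show (i : ℕ) + (K - 1) + 1 = i + K by omega, Nat.add_mod_right, Nat.mod_eq_of_lt i.isLt]

theorem eq_of_forall_apply_finRotate {α : Type*} {K : ℕ} {x : Fin K → α}
    (hx : ∀ i, x (finRotate K i) = x i) (i j : Fin K) : x i = x j := by
  obtain _ | n := K
  · exact i.elim0
  suffices h : ∀ i, x i = x 0 from (h i).trans (h j).symm
  intro i
  induction i using Fin.induction with
  | zero => rfl
  | succ i ih => rw [← Fin.coeSucc_eq_succ, ← finRotate_apply, hx, ih]

theorem mul_exp_sub_one_pos {t : ℝ} (ht : t ≠ 0) : 0 < t * (exp t - 1) := by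
  rcases ht.lt_or_gt with h | h
  · exact mul_pos_of_neg_of_neg h (sub_neg.2 (exp_lt_one_iff.2 h))
  · exact mul_pos h (sub_pos.2 (one_lt_exp_iff.2 h))

theorem mul_exp_sub_one_nonneg (t : ℝ) : 0 ≤ t * (exp t - 1) := by
  rcases eq_or_ne t 0 with rfl | ht
  · simp
  · exact (mul_exp_sub_one_pos ht).le

noncomputable def todaPairing {K : ℕ} (x : Fin K → ℝ) : ℝ :=
  ∑ i, x i * (exp (x i - x (cycSucc i)) - exp (x (cycPred i) - x i))

section todaPairing

variable {K : ℕ}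

theorem todaPairing_eq (x : Fin K → ℝ) :
    todaPairing x = ∑ i, (x i - x (cycSucc i)) * (exp (x i - x (cycSucc i)) - 1) := by
  have hshift : ∑ i, x i * exp (x (cycPred i) - x i)
      = ∑ i, x (cycSucc i) * exp (x i - x (cycSucc i)) := by
    simp only [cycSucc_eq_finRotate, cycPred_eq_finRotate_symm]
    rw [← Equiv.sum_comp (finRotate K) fun i => x i * exp (x ((finRotate K).symm i) - x i)]
    simp only [Equiv.symm_apply_apply]
  have hsum : ∑ i, x (cycSucc i) = ∑ i, x i := by
    simp only [cycSucc_eq_finRotate]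
    exact Equiv.sum_comp (finRotate K) x
  simp only [todaPairing, mul_sub, sub_mul, mul_one, Finset.sum_sub_distrib, hshift, hsum]
  ring

theorem todaPairing_nonneg (x : Fin K → ℝ) : 0 ≤ todaPairing x := by
  rw [todaPairing_eq]
  exact Finset.sum_nonneg fun i _ => mul_exp_sub_one_nonneg _

theorem todaPairing_pos {x : Fin K → ℝ} (hsum : ∑ i, x i = 0) (hx : x ≠ 0) :
    0 < todaPairing x := by
  obtain ⟨i, hi⟩ : ∃ i, x i - x (cycSucc i) ≠ 0 := by
    by_contra! h
    have hconst := eq_of_forall_apply_finRotate (x := x) fun i => by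
      rw [← cycSucc_eq_finRotate]; linarith [h i]
    refine hx (funext fun i => ?_)
    have : (K : ℝ) * x i = 0 := by
      rw [← hsum, Finset.sum_congr rfl fun j _ => hconst j i]
      simp
    simpa [i.pos.ne'] using this
  rw [todaPairing_eq]
  exact Finset.sum_pos' (fun j _ => mul_exp_sub_one_nonneg _)
    ⟨i, Finset.mem_univ i, mul_exp_sub_one_pos hi⟩

theorem continuous_todaPairing : Continuous (todaPairing : (Fin K → ℝ) → ℝ) := by
  unfold todaPairing
  fun_prop

theorem exists_pos_le_todaPairing {ε : ℝ} (hε : 0 < ε) (C : ℝ) :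
    ∃ δ > 0, ∀ x : Fin K → ℝ, ∑ i, x i = 0 → ε ≤ ∑ i, x i ^ 2 → (∀ i, |x i| ≤ C) →
      δ ≤ todaPairing x := by
  set S : Set (Fin K → ℝ) :=
    {x | ∑ i, x i = 0 ∧ ε ≤ ∑ i, x i ^ 2} ∩ univ.pi fun _ => Icc (-C) C
  have hS : IsCompact S := by
    refine (isCompact_univ_pi fun _ => isCompact_Icc).inter_left (IsClosed.inter ?_ ?_)
    · exact isClosed_eq (continuous_finsetSum _ fun i _ => continuous_apply i) continuous_const
    · exact isClosed_le continuous_const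
        (continuous_finsetSum _ fun i _ => (continuous_apply i).pow 2)
  obtain ⟨δ, hδ, hle⟩ := hS.exists_forall_le' continuous_todaPairing.continuousOn
    fun x ⟨⟨hsum, hε'⟩, _⟩ => todaPairing_pos hsum fun h => by simp [h] at hε'; linarith
  exact ⟨δ, hδ, fun x hsum hε' hC => hle x ⟨⟨hsum, hε'⟩, fun i _ => abs_le.1 (hC i)⟩⟩

end todaPairing

theorem Convex.monotoneOn_of_hasDerivAt_nonneg {s : Set ℝ} (hs : Convex ℝ s) {f f' : ℝ → ℝ}
    (hf : ∀ x ∈ s, HasDerivAt f (f' x) x) (hf' : ∀ x ∈ s, 0 ≤ f' x) : MonotoneOn f s :=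
  monotoneOn_of_hasDerivWithinAt_nonneg hs (fun x hx => (hf x hx).continuousAt.continuousWithinAt)
    (fun x hx => (hf x (interior_subset hx)).hasDerivWithinAt)
    fun x hx => hf' x (interior_subset hx)

theorem Convex.antitoneOn_of_hasDerivAt_nonpos {s : Set ℝ} (hs : Convex ℝ s) {f f' : ℝ → ℝ}
    (hf : ∀ x ∈ s, HasDerivAt f (f' x) x) (hf' : ∀ x ∈ s, f' x ≤ 0) : AntitoneOn f s :=
  antitoneOn_of_hasDerivWithinAt_nonpos hs (fun x hx => (hf x hx).continuousAt.continuousWithinAt)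
    (fun x hx => (hf x (interior_subset hx)).hasDerivWithinAt)
    fun x hx => hf' x (interior_subset hx)

theorem tendsto_atTop_of_hasDerivAt_ge {f f' g g' : ℝ → ℝ} {a : ℝ}
    (hf : ∀ x ∈ Ici a, HasDerivAt f (f' x) x) (hg : ∀ x ∈ Ici a, HasDerivAt g (g' x) x)
    (hle : ∀ x ∈ Ici a, g' x ≤ f' x) (hg_top : Tendsto g atTop atTop) :
    Tendsto f atTop atTop := by
  have hmono : MonotoneOn (f - g) (Ici a) := (convex_Ici a).monotoneOn_of_hasDerivAt_nonneg
    (fun x hx => (hf x hx).sub (hg x hx)) fun x hx => sub_nonneg.2 (hle x hx)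
  refine tendsto_atTop_mono' atTop ?_ (tendsto_atTop_add_const_right _ (f a - g a) hg_top)
  filter_upwards [eventually_ge_atTop a] with x hx
  have := hmono (le_refl a) hx hx
  simp only [Pi.sub_apply] at this
  linarith

theorem mul_deriv_nonpos_of_isBoundedUnder {F F' : ℝ → ℝ}
    (hF : ∀ r ∈ Ioi 0, HasDerivAt F (F' r) r) (hmono : MonotoneOn (fun r => r * F' r) (Ioi 0))
    (hbdd : IsBoundedUnder (· ≤ ·) atTop F) {r : ℝ} (hr : 0 < r) : r * F' r ≤ 0 := by
  by_contra! hc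
  -- `F' x ≥ r F' r / x` for `x ≥ r`, so `F` grows at least like `r F' r * log x`.
  refine not_isBoundedUnder_of_tendsto_atTop ?_ hbdd
  refine tendsto_atTop_of_hasDerivAt_ge (a := r) (g := fun x => r * F' r * log x)
    (fun x hx => hF x (hr.trans_le hx))
    (fun x hx => (hasDerivAt_log (hr.trans_le hx).ne').const_mul _) (fun x hx => ?_)
    (tendsto_log_atTop.const_mul_atTop hc)
  have hx0 : 0 < x := hr.trans_le hx
  rw [← div_eq_mul_inv, div_le_iff₀ hx0, mul_comm (F' x)]
  exact hmono hr hx0 hx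

theorem tendsto_nhds_zero_of_antitoneOn {F : ℝ → ℝ} {a : ℝ} (hF : AntitoneOn F (Ioi a))
    (h0 : ∀ r ∈ Ioi a, 0 ≤ F r) (hsmall : ∀ ε > 0, ∃ r ∈ Ioi a, F r < ε) :
    Tendsto F atTop (𝓝 0) := by
  rw [tendsto_order]
  refine ⟨fun b hb => ?_, fun b hb => ?_⟩
  · filter_upwards [eventually_gt_atTop a] with r hr using hb.trans_le (h0 r hr)
  · obtain ⟨r₀, hr₀, hlt⟩ := hsmall b hb
    filter_upwards [eventually_ge_atTop r₀] with r hr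
    exact (hF hr₀ (mem_Ioi.2 (lt_of_lt_of_le hr₀ hr)) hr).trans_lt hlt

theorem hasDerivAt_sum_sq {ι : Type*} [Fintype ι] {u : ι → ℝ → ℝ} {ρ : ℝ}
    (hu : ∀ i, DifferentiableAt ℝ (u i) ρ) :
    HasDerivAt (fun r => ∑ i, u i r ^ 2) (∑ i, 2 * u i ρ * deriv (u i) ρ) ρ := by
  refine HasDerivAt.fun_sum fun i _ => ?_
  exact ((hu i).hasDerivAt.fun_pow 2).congr_deriv (by ring)

theorem hasDerivAt_mul_two_mul_deriv {v : ℝ → ℝ} {ρ : ℝ} (hρ : ρ ≠ 0)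
    (hv : DifferentiableAt ℝ v ρ) (hv' : DifferentiableAt ℝ (deriv v) ρ) :
    HasDerivAt (fun r => r * (2 * v r * deriv v r))
      (2 * ρ * deriv v ρ ^ 2 + 2 * ρ * (v ρ * (deriv (deriv v) ρ + 1 / ρ * deriv v ρ))) ρ := by
  have h := (hasDerivAt_id' ρ).fun_mul ((hv.hasDerivAt.const_mul 2).fun_mul hv'.hasDerivAt)
  refine h.congr_deriv ?_
  field_simp
  ring

def IsRadialTodaSolution {K : ℕ} (u : Fin K → ℝ → ℝ) : Prop :=
  ∀ i, ∀ ρ : ℝ, 0 < ρ →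
    DifferentiableAt ℝ (u i) ρ ∧ DifferentiableAt ℝ (deriv (u i)) ρ ∧
      deriv (deriv (u i)) ρ + (1 / ρ) * deriv (u i) ρ
        = exp (u i ρ - u (cycSucc i) ρ) - exp (u (cycPred i) ρ - u i ρ)

/-- `ρ F'(ρ)` for `F = ∑ i, u i ^ 2`; its derivative is `ρ ΔF` with `Δ` the radial Laplacian. -/
noncomputable def radialFlux {K : ℕ} (u : Fin K → ℝ → ℝ) (r : ℝ) : ℝ :=
  r * ∑ i, 2 * u i r * deriv (u i) r

namespace IsRadialTodaSolution

variable {K : ℕ} {u : Fin K → ℝ → ℝ}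

theorem hasDerivAt_radialFlux (hu : IsRadialTodaSolution u) {ρ : ℝ} (hρ : 0 < ρ) :
    HasDerivAt (radialFlux u)
      (2 * ρ * ∑ i, deriv (u i) ρ ^ 2 + 2 * ρ * todaPairing fun i => u i ρ) ρ := by
  have h := HasDerivAt.fun_sum (u := Finset.univ) fun i _ =>
    hasDerivAt_mul_two_mul_deriv hρ.ne' (hu i ρ hρ).1 (hu i ρ hρ).2.1
  simp only [(hu _ ρ hρ).2.2, Finset.sum_add_distrib, ← Finset.mul_sum] at h
  exact h

theorem monotoneOn_radialFlux (hu : IsRadialTodaSolution u) :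
    MonotoneOn (radialFlux u) (Ioi 0) :=
  (convex_Ioi 0).monotoneOn_of_hasDerivAt_nonneg (fun _ hρ => hu.hasDerivAt_radialFlux hρ)
    fun ρ (hρ : 0 < ρ) => by
      have := todaPairing_nonneg fun i => u i ρ
      positivity

theorem radialFlux_nonpos (hu : IsRadialTodaSolution u)
    (hbdd : IsBoundedUnder (· ≤ ·) atTop fun r => ∑ i, u i r ^ 2) {ρ : ℝ} (hρ : 0 < ρ) :
    radialFlux u ρ ≤ 0 :=
  mul_deriv_nonpos_of_isBoundedUnder (fun r hr => hasDerivAt_sum_sq fun i => (hu i r hr).1)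
    hu.monotoneOn_radialFlux hbdd hρ

theorem antitoneOn_sum_sq (hu : IsRadialTodaSolution u) (hflux : ∀ ρ > 0, radialFlux u ρ ≤ 0) :
    AntitoneOn (fun r => ∑ i, u i r ^ 2) (Ioi 0) :=
  (convex_Ioi 0).antitoneOn_of_hasDerivAt_nonpos
    (fun r hr => hasDerivAt_sum_sq fun i => (hu i r hr).1)
    fun r hr => nonpos_of_mul_nonpos_right (hflux r hr) hr

theorem tendsto_sum_sq_atTop_zero (hu : IsRadialTodaSolution u)
    (hsum : ∀ ρ > 0, ∑ i, u i ρ = 0) {C : ℝ} (hC : ∀ i, ∀ ρ ≥ 1, |u i ρ| ≤ C)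
    (hflux : ∀ ρ > 0, radialFlux u ρ ≤ 0) :
    Tendsto (fun r => ∑ i, u i r ^ 2) atTop (𝓝 0) := by
  refine tendsto_nhds_zero_of_antitoneOn (hu.antitoneOn_sum_sq hflux) (fun r _ => by positivity)
    fun ε hε => ?_
  by_contra! hε_le
  obtain ⟨δ, hδ, hδ_le⟩ := exists_pos_le_todaPairing (K := K) hε C
  -- On `[1, ∞)` the pairing is at least `δ`, so the flux grows like `δ r ^ 2`.
  have hgrow : Tendsto (radialFlux u) atTop atTop := by
    refine tendsto_atTop_of_hasDerivAt_ge (a := 1) (g := fun r => δ * r ^ 2)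
      (fun r hr => hu.hasDerivAt_radialFlux (one_pos.trans_le hr))
      (fun r _ => by simpa using (hasDerivAt_pow 2 r).const_mul δ) (fun r hr => ?_)
      ((tendsto_pow_atTop two_ne_zero).const_mul_atTop hδ)
    have hr0 : (0 : ℝ) < r := one_pos.trans_le hr
    have hpair := hδ_le _ (hsum r hr0) (hε_le r hr0) fun i => hC i r hr
    have hsq : 0 ≤ ∑ i, deriv (u i) r ^ 2 := by positivity
    nlinarith
  obtain ⟨r, hr, hr0⟩ := ((hgrow.eventually_gt_atTop 0).and (eventually_gt_atTop 0)).exists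
  exact (hflux r hr0).not_gt hr

end IsRadialTodaSolution

theorem toda_norm_squared_decreasing_to_zero_general (K : ℕ)
    (u : Fin K → ℝ → ℝ)
    (hdiff : ∀ i, ∀ ρ : ℝ, 0 < ρ →
      DifferentiableAt ℝ (u i) ρ ∧ DifferentiableAt ℝ (deriv (u i)) ρ)
    (htoda : ∀ i, ∀ ρ : ℝ, 0 < ρ →
      deriv (deriv (u i)) ρ + (1 / ρ) * deriv (u i) ρ
        = Real.exp (u i ρ - u (cycSucc i) ρ) - Real.exp (u (cycPred i) ρ - u i ρ))
    (hsum : ∀ ρ : ℝ, 0 < ρ → ∑ i, u i ρ = 0)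
    (hbdd : ∀ i, ∃ C : ℝ, ∀ ρ : ℝ, 1 ≤ ρ → |u i ρ| ≤ C) :
    AntitoneOn (fun r => ∑ i, (u i r) ^ 2) (Set.Ioi (0 : ℝ)) ∧
      Filter.Tendsto (fun r => ∑ i, (u i r) ^ 2) Filter.atTop (nhds 0) := by
  have hu : IsRadialTodaSolution u := fun i ρ hρ =>
    ⟨(hdiff i ρ hρ).1, (hdiff i ρ hρ).2, htoda i ρ hρ⟩
  choose C hC using hbdd
  obtain ⟨M, hM⟩ := Finite.bddAbove_range C
  have hbound : ∀ i, ∀ ρ ≥ 1, |u i ρ| ≤ M := fun i ρ hρ => (hC i ρ hρ).trans (hM ⟨i, rfl⟩)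
  have hF_bdd : IsBoundedUnder (· ≤ ·) atTop fun r => ∑ i, u i r ^ 2 := by
    refine isBoundedUnder_of_eventually_le (a := ∑ _i : Fin K, M ^ 2) ?_
    filter_upwards [eventually_ge_atTop 1] with r hr
    exact Finset.sum_le_sum fun i _ => sq_le_sq' (abs_le.1 (hbound i r hr)).1
      (abs_le.1 (hbound i r hr)).2
  have hflux : ∀ ρ > 0, radialFlux u ρ ≤ 0 := fun _ hρ => hu.radialFlux_nonpos hF_bdd hρ
  exact ⟨hu.antitoneOn_sum_sq hflux, hu.tendsto_sum_sq_atTop_zero hsum hbound hflux⟩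

theorem toda_norm_squared_decreasing_to_zero (K : ℕ) (hK : 2 ≤ K)
    (u : Fin K → ℝ → ℝ)
    (hdiff : ∀ i, ∀ ρ : ℝ, 0 < ρ →
      DifferentiableAt ℝ (u i) ρ ∧ DifferentiableAt ℝ (deriv (u i)) ρ)
    (htoda : ∀ i, ∀ ρ : ℝ, 0 < ρ →
      deriv (deriv (u i)) ρ + (1 / ρ) * deriv (u i) ρ
        = Real.exp (u i ρ - u (cycSucc i) ρ) - Real.exp (u (cycPred i) ρ - u i ρ))
    (hsum : ∀ ρ : ℝ, 0 < ρ → ∑ i, u i ρ = 0)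
    (hbdd : ∀ i, ∃ C : ℝ, ∀ ρ : ℝ, 1 ≤ ρ → |u i ρ| ≤ C) :
    AntitoneOn (fun r => ∑ i, (u i r) ^ 2) (Set.Ioi (0 : ℝ)) ∧
      Filter.Tendsto (fun r => ∑ i, (u i r) ^ 2) Filter.atTop (nhds 0) :=
  toda_norm_squared_decreasing_to_zero_general K u hdiff htoda hsum hbdd
end

section
/- Let K ≥ 2 and N ≥ 1 be integers and α_1,…,α_K ∈ ℝ. Suppose u_1,…,u_K : (0,∞) → ℝ are twice differentiable, satisfy (with indices modulo K) (1/4)(u_i''(r) + (1/r)u_i'(r)) = r^{2N/K}·(exp(u_i(r) − u_{i+1}(r)) − exp(u_{i−1}(r) − u_i(r))) for all r > 0, and satisfy the boundary conditions: lim_{r→0⁺} r·u_i'(r) = 2α_i and lim_{r→0⁺} r^{2(K+N)/K}·(exp(u_i(r) − u_{i+1}(r)) − 1) = 0 for each i, and lim_{r→∞} r·u_i'(r) = 0 for each i and lim_{r→∞} r^{2(K+N)/K}·∑_{i=1}^K (exp(u_i(r) − u_{i+1}(r)) − 1) = 0. Assume moreover that the function r ↦ r^{2N/K + 1}·∑_{i=1}^K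 (exp(u_i(r) − u_{i+1}(r)) − 1) is Lebesgue integrable on (0,∞). Then 4·∫_0^∞ r^{2N/K + 1}·∑_{i=1}^K (exp(u_i(r) − u_{i+1}(r)) − 1) dr = (K/(K+N))·∑_{i=1}^K α_i². (This is the value of the regulated L² norm μ of the Higgs field at a ℂ^×-fixed point.) -/
/-!
With `γ = 2N/K`, the function `Φ(r) = r^(γ+2) ∑ᵢ (e^{uᵢ - uᵢ₊₁} - 1) - (1/8) ∑ᵢ (r uᵢ')²` is a
Pohozaev-type primitive: by the Toda equations its derivative is
`(γ+2) r^(γ+1) ∑ᵢ (e^{uᵢ - uᵢ₊₁} - 1)`, the cross terms cancelling after a cyclic shift of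
the summation index. The boundary conditions say `Φ → -(1/2) ∑ᵢ αᵢ²` at `0⁺` and `Φ → 0`
at `∞`, so integrating gives `(γ+2) ∫ r^(γ+1) ∑ᵢ (e^{uᵢ - uᵢ₊₁} - 1) dr = (1/2) ∑ᵢ αᵢ²`,
where `γ + 2 = 2(K+N)/K`.
-/

open scoped BigOperators
open Filter MeasureTheory

open Set Topology

theorem integral_Ioi_of_hasDerivAt_of_tendsto_nhdsGT {E : Type*} [NormedAddCommGroup E]
    [NormedSpace ℝ E] [CompleteSpace E] {f f' : ℝ → E} {a : ℝ} {l m : E}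
    (hderiv : ∀ x ∈ Ioi a, HasDerivAt f (f' x) x) (f'int : IntegrableOn f' (Ioi a))
    (hzero : Tendsto f (𝓝[>] a) (𝓝 l)) (htop : Tendsto f atTop (𝓝 m)) :
    ∫ x in Ioi a, f' x = m - l := by
  rw [← Ici_sdiff_left] at hzero
  have hupdate : ∀ x ∈ Ioi a, Function.update f a l =ᶠ[𝓝 x] f := fun x hx ↦ by
    filter_upwards [eventually_ne_nhds (ne_of_gt hx)] with y hy
    exact Function.update_of_ne hy l f
  have h := integral_Ioi_of_hasDerivAt_of_tendsto (continuousWithinAt_update_same.mpr hzero)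
    (fun x hx ↦ (hderiv x hx).congr_of_eventuallyEq (hupdate x hx)) f'int
    (htop.congr' (eventually_ne_atTop a |>.mono fun x hx ↦ (Function.update_of_ne hx l f).symm))
  simpa only [Function.update_self] using h

theorem Equiv.sum_mul_sub_comp_perm {ι R : Type*} [Fintype ι] [CommRing R] (σ : Equiv.Perm ι)
    (a d : ι → R) :
    ∑ i, a i * (d i - d (σ i)) = ∑ i, d i * (a i - a (σ.symm i)) := by
  have hshift : ∑ i, a i * d (σ i) = ∑ i, a (σ.symm i) * d i := by
    rw [← Equiv.sum_comp σ (fun i ↦ a (σ.symm i) * d i)]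
    simp only [Equiv.symm_apply_apply]
  simp only [mul_sub, Finset.sum_sub_distrib, hshift, mul_comm]

lemma cycPred_cycSucc {K : ℕ} (i : Fin K) : cycPred (cycSucc i) = i := by
  apply Fin.ext
  change (((i : ℕ) + 1) % K + (K - 1)) % K = i
  rw [Nat.mod_add_mod, show (i : ℕ) + 1 + (K - 1) = i + K by have := i.pos; omega,
    Nat.add_mod_right, Nat.mod_eq_of_lt i.isLt]

lemma cycSucc_cycPred {K : ℕ} (i : Fin K) : cycSucc (cycPred i) = i := by
  apply Fin.ext
  change (((i : ℕ) + (K - 1)) % K + 1) % K = i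
  rw [Nat.mod_add_mod, show (i : ℕ) + (K - 1) + 1 = i + K by have := i.pos; omega,
    Nat.add_mod_right, Nat.mod_eq_of_lt i.isLt]

def cycPerm (K : ℕ) : Equiv.Perm (Fin K) where
  toFun := cycSucc
  invFun := cycPred
  left_inv := cycPred_cycSucc
  right_inv := cycSucc_cycPred

section Toda

variable {ι : Type*} [Fintype ι] (σ : Equiv.Perm ι) (u : ι → ℝ → ℝ) (γ : ℝ)

noncomputable def todaPotential (r : ℝ) : ℝ := ∑ i, (Real.exp (u i r - u (σ i) r) - 1)

noncomputable def pohozaevFunction (r : ℝ) : ℝ :=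
  r ^ (γ + 2) * todaPotential σ u r - (1 / 8) * ∑ i, (r * deriv (u i) r) ^ 2

theorem hasDerivAt_pohozaevFunction {r : ℝ} (hr : 0 < r)
    (hdiff : ∀ i, DifferentiableAt ℝ (u i) r ∧ DifferentiableAt ℝ (deriv (u i)) r)
    (hode : ∀ i, (1 / 4) * (deriv (deriv (u i)) r + (1 / r) * deriv (u i) r)
        = r ^ γ * (Real.exp (u i r - u (σ i) r) - Real.exp (u (σ.symm i) r - u i r))) :
    HasDerivAt (pohozaevFunction σ u γ) ((γ + 2) * (r ^ (γ + 1) * todaPotential σ u r)) r := by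
  have hu i : HasDerivAt (u i) (deriv (u i) r) r := (hdiff i).1.hasDerivAt
  have hu' i : HasDerivAt (deriv (u i)) (deriv (deriv (u i)) r) r := (hdiff i).2.hasDerivAt
  have hpot : HasDerivAt (todaPotential σ u) (∑ i, Real.exp (u i r - u (σ i) r) *
      (deriv (u i) r - deriv (u (σ i)) r)) r :=
    HasDerivAt.fun_sum fun i _ ↦ (((hu i).sub (hu (σ i))).exp).sub_const 1
  have hkin : HasDerivAt (fun x ↦ (1 / 8) * ∑ i, (x * deriv (u i) x) ^ 2)
      ((1 / 4) * ∑ i, r * deriv (u i) r * (deriv (u i) r + r * deriv (deriv (u i)) r)) r := by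
    refine (HasDerivAt.fun_sum fun i _ ↦ ((hasDerivAt_id r).mul (hu' i)).pow 2).const_mul _
      |>.congr_deriv ?_
    simp only [Finset.mul_sum]
    exact Finset.sum_congr rfl fun i _ ↦ by simp only [Pi.mul_apply, id]; push_cast; ring
  have hcancel : r ^ (γ + 2) * ∑ i, Real.exp (u i r - u (σ i) r) *
      (deriv (u i) r - deriv (u (σ i)) r) =
      (1 / 4) * ∑ i, r * deriv (u i) r * (deriv (u i) r + r * deriv (deriv (u i)) r) := by
    rw [Equiv.sum_mul_sub_comp_perm, Finset.mul_sum, Finset.mul_sum]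
    refine Finset.sum_congr rfl fun i _ ↦ ?_
    rw [Equiv.apply_symm_apply, Real.rpow_add hr, Real.rpow_two]
    linear_combination (-(r ^ 2 * deriv (u i) r)) * hode i
      + (1 / 4 * r * deriv (u i) r ^ 2) * mul_inv_cancel₀ hr.ne'
  refine ((Real.hasDerivAt_rpow_const (Or.inl hr.ne')).mul hpot |>.sub hkin).congr_deriv ?_
  rw [hcancel, show γ + 2 - 1 = γ + 1 by ring]
  ring

theorem tendsto_pohozaevFunction {l : Filter ℝ} {A : ℝ} {c : ι → ℝ}
    (hpot : Tendsto (fun r ↦ r ^ (γ + 2) * todaPotential σ u r) l (𝓝 A))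
    (hkin : ∀ i, Tendsto (fun r ↦ r * deriv (u i) r) l (𝓝 (c i))) :
    Tendsto (pohozaevFunction σ u γ) l (𝓝 (A - (1 / 8) * ∑ i, c i ^ 2)) :=
  hpot.sub ((tendsto_finsetSum _ fun i _ ↦ (hkin i).pow 2).const_mul _)

theorem integral_rpow_mul_todaPotential {α : ι → ℝ}
    (hdiff : ∀ i, ∀ r : ℝ, 0 < r →
      DifferentiableAt ℝ (u i) r ∧ DifferentiableAt ℝ (deriv (u i)) r)
    (hode : ∀ i, ∀ r : ℝ, 0 < r → (1 / 4) * (deriv (deriv (u i)) r + (1 / r) * deriv (u i) r)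
        = r ^ γ * (Real.exp (u i r - u (σ i) r) - Real.exp (u (σ.symm i) r - u i r)))
    (hpot_zero : Tendsto (fun r ↦ r ^ (γ + 2) * todaPotential σ u r) (𝓝[>] 0) (𝓝 0))
    (hkin_zero : ∀ i, Tendsto (fun r ↦ r * deriv (u i) r) (𝓝[>] 0) (𝓝 (2 * α i)))
    (hpot_top : Tendsto (fun r ↦ r ^ (γ + 2) * todaPotential σ u r) atTop (𝓝 0))
    (hkin_top : ∀ i, Tendsto (fun r ↦ r * deriv (u i) r) atTop (𝓝 0))
    (hint : IntegrableOn (fun r ↦ r ^ (γ + 1) * todaPotential σ u r) (Ioi 0)) :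
    (γ + 2) * ∫ r in Ioi 0, r ^ (γ + 1) * todaPotential σ u r = (1 / 2) * ∑ i, α i ^ 2 := by
  rw [← integral_const_mul, integral_Ioi_of_hasDerivAt_of_tendsto_nhdsGT
    (fun r hr ↦ hasDerivAt_pohozaevFunction σ u γ hr (fun i ↦ hdiff i r hr) (fun i ↦ hode i r hr))
    (hint.const_mul _) (tendsto_pohozaevFunction σ u γ hpot_zero hkin_zero)
    (tendsto_pohozaevFunction σ u γ hpot_top hkin_top)]
  simp only [zero_pow two_ne_zero, Finset.sum_const_zero, mul_pow, ← Finset.mul_sum]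
  ring

end Toda

theorem regulated_L2_norm_value_general (K N : ℕ)
    (α : Fin K → ℝ) (u : Fin K → ℝ → ℝ)
    (hdiff : ∀ i, ∀ r : ℝ, 0 < r →
      DifferentiableAt ℝ (u i) r ∧ DifferentiableAt ℝ (deriv (u i)) r)
    (hode : ∀ i, ∀ r : ℝ, 0 < r →
      (1 / 4) * (deriv (deriv (u i)) r + (1 / r) * deriv (u i) r)
        = r ^ ((2 * (N : ℝ)) / K) *
            (Real.exp (u i r - u (cycSucc i) r) - Real.exp (u (cycPred i) r - u i r)))
    (hbc0deriv : ∀ i, Tendsto (fun r : ℝ => r * deriv (u i) r)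
      (nhdsWithin 0 (Set.Ioi 0)) (nhds (2 * α i)))
    (hbc0exp : ∀ i, Tendsto
      (fun r : ℝ => r ^ ((2 * ((K : ℝ) + N)) / K) * (Real.exp (u i r - u (cycSucc i) r) - 1))
      (nhdsWithin 0 (Set.Ioi 0)) (nhds 0))
    (hbcInfDeriv : ∀ i, Tendsto (fun r : ℝ => r * deriv (u i) r) atTop (nhds 0))
    (hbcInfExp : Tendsto
      (fun r : ℝ => r ^ ((2 * ((K : ℝ) + N)) / K) *
        ∑ i, (Real.exp (u i r - u (cycSucc i) r) - 1))
      atTop (nhds 0))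
    (hint : IntegrableOn
      (fun r : ℝ => r ^ ((2 * (N : ℝ)) / K + 1) *
        ∑ i, (Real.exp (u i r - u (cycSucc i) r) - 1))
      (Set.Ioi 0)) :
    4 * ∫ r in Set.Ioi (0 : ℝ),
        r ^ ((2 * (N : ℝ)) / K + 1) * ∑ i, (Real.exp (u i r - u (cycSucc i) r) - 1)
      = ((K : ℝ) / ((K : ℝ) + N)) * ∑ i, (α i) ^ 2 := by
  obtain rfl | hK := K.eq_zero_or_pos
  · simp
  have hexp : (2 * ((K : ℝ) + N)) / K = 2 * (N : ℝ) / K + 2 := by field_simp; ring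
  rw [hexp] at hbc0exp hbcInfExp
  have hpot_zero : Tendsto (fun r ↦ r ^ (2 * (N : ℝ) / K + 2) * todaPotential (cycPerm K) u r)
      (𝓝[>] 0) (𝓝 0) := by
    have hsum := tendsto_finsetSum Finset.univ fun i _ ↦ hbc0exp i
    simp only [← Finset.mul_sum, Finset.sum_const_zero] at hsum
    exact hsum
  have hidentity := integral_rpow_mul_todaPotential (cycPerm K) u _ hdiff hode hpot_zero hbc0deriv
    hbcInfExp hbcInfDeriv hint
  rw [← hexp] at hidentity
  change 4 * ∫ r in Ioi 0, r ^ (2 * (N : ℝ) / K + 1) * todaPotential (cycPerm K) u r = _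
  field_simp at hidentity ⊢
  linear_combination hidentity

theorem regulated_L2_norm_value (K N : ℕ) (hK : 2 ≤ K) (hN : 1 ≤ N)
    (α : Fin K → ℝ) (u : Fin K → ℝ → ℝ)
    (hdiff : ∀ i, ∀ r : ℝ, 0 < r →
      DifferentiableAt ℝ (u i) r ∧ DifferentiableAt ℝ (deriv (u i)) r)
    (hode : ∀ i, ∀ r : ℝ, 0 < r →
      (1 / 4) * (deriv (deriv (u i)) r + (1 / r) * deriv (u i) r)
        = r ^ ((2 * (N : ℝ)) / K) *
            (Real.exp (u i r - u (cycSucc i) r) - Real.exp (u (cycPred i) r - u i r)))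
    (hbc0deriv : ∀ i, Tendsto (fun r : ℝ => r * deriv (u i) r)
      (nhdsWithin 0 (Set.Ioi 0)) (nhds (2 * α i)))
    (hbc0exp : ∀ i, Tendsto
      (fun r : ℝ => r ^ ((2 * ((K : ℝ) + N)) / K) * (Real.exp (u i r - u (cycSucc i) r) - 1))
      (nhdsWithin 0 (Set.Ioi 0)) (nhds 0))
    (hbcInfDeriv : ∀ i, Tendsto (fun r : ℝ => r * deriv (u i) r) atTop (nhds 0))
    (hbcInfExp : Tendsto
      (fun r : ℝ => r ^ ((2 * ((K : ℝ) + N)) / K) *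
        ∑ i, (Real.exp (u i r - u (cycSucc i) r) - 1))
      atTop (nhds 0))
    (hint : IntegrableOn
      (fun r : ℝ => r ^ ((2 * (N : ℝ)) / K + 1) *
        ∑ i, (Real.exp (u i r - u (cycSucc i) r) - 1))
      (Set.Ioi 0)) :
    4 * ∫ r in Set.Ioi (0 : ℝ),
        r ^ ((2 * (N : ℝ)) / K + 1) * ∑ i, (Real.exp (u i r - u (cycSucc i) r) - 1)
      = ((K : ℝ) / ((K : ℝ) + N)) * ∑ i, (α i) ^ 2 :=
  regulated_L2_norm_value_general K N α u hdiff hode hbc0deriv hbc0exp hbcInfDeriv hbcInfExp hint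
end

section
/- Fix u, z ∈ ℂ. For w, γ ∈ ℂ with w ≠ 0, γ ≠ 0 and γ² − w³ = u, let Ψ_{w,γ}(z) be the 2×2 complex matrix with rows (γ, z² + zw + w²) and (z − w, −γ), and let g = i·[[γ/w, w + z], [0, −w/γ]] (which has determinant 1). Then g·Ψ_{w,γ}(z)·g^{−1} converges to the matrix Φ_u(z) with rows (0, z³ + u) and (1, 0) as |w| → ∞: for every ε > 0 there exists R > 0 such that for all such (w, γ) with |w| ≥ R, every entry of g·Ψ_{w,γ}(z)·g^{−1} − Φ_u(z) has modulus less than ε. -/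
open Complex

/-- The Higgs field on the big stratum of ℳ_{2,3}:
Ψ_{w,γ}(z) = [[γ, z² + zw + w²],[z − w, −γ]]. -/
noncomputable def PsiBig (w γ z : ℂ) : Matrix (Fin 2) (Fin 2) ℂ :=
  !![γ, z ^ 2 + z * w + w ^ 2; z - w, -γ]

/-- The Higgs field on the small stratum of ℳ_{2,3}: Φ_u(z) = [[0, z³+u],[1,0]]. -/
noncomputable def PhiSmall (u z : ℂ) : Matrix (Fin 2) (Fin 2) ℂ :=
  !![0, z ^ 3 + u; 1, 0]

/-- The gauge transformation g = i·[[γ/w, w+z],[0, −w/γ]]. -/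
noncomputable def gGauge (w γ z : ℂ) : Matrix (Fin 2) (Fin 2) ℂ :=
  Complex.I • !![γ / w, w + z; 0, -w / γ]

/-! Conjugation by `g` turns `Ψ_{w,γ}(z)` into `Φ_u(z)` plus the matrix with entries
`(u + w z²)/γ`, `u z (w − z)/w²`, `−(w² z + u)/γ²` and `−(u + w z²)/γ`. On the curve
`γ² = w³ + u` we have `γ²/w³ → 1` as `w → ∞`, so each entry is a polynomial in `w⁻¹` without
constant term divided by a quantity tending to `1`. Since `|γ|` only grows like `|w|^{3/2}`,
this is applied to the square of the diagonal entry. -/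

open Filter Topology

theorem tendsto_zero_of_tendsto_sq {α 𝕜 : Type*} [NormedDivisionRing 𝕜] {l : Filter α} {f : α → 𝕜}
    (h : Tendsto (fun x => f x ^ 2) l (𝓝 0)) : Tendsto f l (𝓝 0) := by
  rw [tendsto_zero_iff_norm_tendsto_zero] at h ⊢
  have hs := (Real.continuous_sqrt.tendsto 0).comp h
  simpa [Function.comp_def, norm_pow, Real.sqrt_sq (norm_nonneg _)] using hs

section Gauge

variable {u w γ : ℂ} (z : ℂ)

theorem gGauge_inv (hw : w ≠ 0) (hγ : γ ≠ 0) :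
    (gGauge w γ z)⁻¹ = I • !![-w / γ, -(w + z); 0, γ / w] := by
  refine Matrix.inv_eq_right_inv ?_
  ext i j
  fin_cases i <;> fin_cases j <;>
    simp [gGauge, Matrix.mul_apply, Fin.sum_univ_two] <;> field_simp <;> ring_nf <;> simp

theorem gGauge_mul_PsiBig_mul_inv (hw : w ≠ 0) (hγ : γ ≠ 0) (hu : γ ^ 2 - w ^ 3 = u) :
    gGauge w γ z * PsiBig w γ z * (gGauge w γ z)⁻¹ = PhiSmall u z +
      !![(u + w * z ^ 2) / γ, u * z * (w - z) / w ^ 2;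
        -(w ^ 2 * z + u) / γ ^ 2, -((u + w * z ^ 2) / γ)] := by
  subst hu
  rw [gGauge_inv z hw hγ, gGauge, smul_mul_assoc, smul_mul_assoc, mul_smul_comm, smul_smul, I_mul_I]
  ext i j
  fin_cases i <;> fin_cases j <;>
    simp [PsiBig, PhiSmall] <;> field_simp <;> ring

end Gauge

noncomputable def curveAtInfty (u : ℂ) : Filter (ℂ × ℂ) :=
  comap (fun p => ‖p.1‖) atTop ⊓ 𝓟 {p | p.1 ≠ 0 ∧ p.2 ≠ 0 ∧ p.2 ^ 2 - p.1 ^ 3 = u}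

namespace curveAtInfty

variable (u : ℂ)

theorem eventually_iff {P : ℂ × ℂ → Prop} :
    (∀ᶠ p in curveAtInfty u, P p) ↔
      ∃ R, ∀ w γ : ℂ, w ≠ 0 → γ ≠ 0 → γ ^ 2 - w ^ 3 = u → R ≤ ‖w‖ → P (w, γ) := by
  simp only [curveAtInfty, eventually_inf_principal, eventually_comap, eventually_atTop]
  constructor
  · rintro ⟨R, hR⟩
    exact ⟨R, fun w γ hw hγ hu hRw => hR _ hRw (w, γ) rfl ⟨hw, hγ, hu⟩⟩
  · rintro ⟨R, hR⟩
    exact ⟨R, fun _ hRb p hp ⟨hw, hγ, hu⟩ => hR p.1 p.2 hw hγ hu (hp ▸ hRb)⟩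

theorem eventually_mem :
    ∀ᶠ p in curveAtInfty u, p.1 ≠ 0 ∧ p.2 ≠ 0 ∧ p.2 ^ 2 - p.1 ^ 3 = u :=
  mem_inf_of_right (mem_principal_self _)

theorem tendsto_inv_fst : Tendsto (fun p => p.1⁻¹) (curveAtInfty u) (𝓝 0) :=
  tendsto_inv₀_cobounded.comp
    (tendsto_norm_atTop_iff_cobounded.1 (tendsto_comap.mono_left inf_le_left))

theorem tendsto_sq_snd_div_cube_fst :
    Tendsto (fun p => p.2 ^ 2 / p.1 ^ 3) (curveAtInfty u) (𝓝 1) := by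
  have h := ((tendsto_inv_fst u).pow 3).const_mul u |>.const_add 1
  rw [zero_pow three_ne_zero, mul_zero, add_zero] at h
  refine h.congr' ((eventually_mem u).mono fun p ⟨hw, _, hu⟩ => ?_)
  rw [← hu]; field_simp; ring

variable (z : ℂ)

theorem tendsto_div_snd_sq :
    Tendsto (fun p => -(p.1 ^ 2 * z + u) / p.2 ^ 2) (curveAtInfty u) (𝓝 0) := by
  have h := ((((tendsto_inv_fst u).const_mul z).add (((tendsto_inv_fst u).pow 3).const_mul u)).neg).div
    (tendsto_sq_snd_div_cube_fst u) one_ne_zero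
  simp only [mul_zero, zero_pow three_ne_zero, add_zero, neg_zero, zero_div] at h
  refine h.congr' ((eventually_mem u).mono fun p ⟨hw, hγ, _⟩ => ?_)
  simp only [Pi.div_apply]
  field_simp

theorem tendsto_div_fst_sq :
    Tendsto (fun p => u * z * (p.1 - z) / p.1 ^ 2) (curveAtInfty u) (𝓝 0) := by
  have h := ((tendsto_inv_fst u).sub (((tendsto_inv_fst u).pow 2).const_mul z)).const_mul (u * z)
  simp only [mul_zero, zero_pow two_ne_zero, sub_zero] at h
  refine h.congr' ((eventually_mem u).mono fun p ⟨hw, _, _⟩ => ?_)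
  field_simp

theorem tendsto_div_snd :
    Tendsto (fun p => (u + p.1 * z ^ 2) / p.2) (curveAtInfty u) (𝓝 0) := by
  refine tendsto_zero_of_tendsto_sq ?_
  have h := (((((tendsto_inv_fst u).pow 3).const_mul (u ^ 2)).add
    (((tendsto_inv_fst u).pow 2).const_mul (2 * u * z ^ 2))).add
    ((tendsto_inv_fst u).const_mul (z ^ 4))).div (tendsto_sq_snd_div_cube_fst u) one_ne_zero
  simp only [mul_zero, zero_pow three_ne_zero, zero_pow two_ne_zero, add_zero, zero_div] at h
  refine h.congr' ((eventually_mem u).mono fun p ⟨hw, hγ, _⟩ => ?_)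
  simp only [Pi.div_apply]
  field_simp
  ring

end curveAtInfty

theorem tendsto_gGauge_mul_PsiBig_mul_inv (u z : ℂ) :
    Tendsto (fun p => gGauge p.1 p.2 z * PsiBig p.1 p.2 z * (gGauge p.1 p.2 z)⁻¹)
      (curveAtInfty u) (𝓝 (PhiSmall u z)) := by
  have hD : Tendsto (fun p : ℂ × ℂ => !![(u + p.1 * z ^ 2) / p.2, u * z * (p.1 - z) / p.1 ^ 2;
      -(p.1 ^ 2 * z + u) / p.2 ^ 2, -((u + p.1 * z ^ 2) / p.2)]) (curveAtInfty u) (𝓝 0) := by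
    refine tendsto_pi_nhds.2 fun i => tendsto_pi_nhds.2 fun j => ?_
    fin_cases i <;> fin_cases j
    · exact curveAtInfty.tendsto_div_snd u z
    · exact curveAtInfty.tendsto_div_fst_sq u z
    · exact curveAtInfty.tendsto_div_snd_sq u z
    · simpa using (curveAtInfty.tendsto_div_snd u z).neg
  simpa using (hD.const_add (PhiSmall u z)).congr' ((curveAtInfty.eventually_mem u).mono
    fun p ⟨hw, hγ, hu⟩ => (gGauge_mul_PsiBig_mul_inv z hw hγ hu).symm)

theorem big_stratum_limit_to_small (u z : ℂ) :
    ∀ ε : ℝ, 0 < ε → ∃ R : ℝ, 0 < R ∧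
      ∀ w γ : ℂ, w ≠ 0 → γ ≠ 0 → γ ^ 2 - w ^ 3 = u → R ≤ ‖w‖ →
        ∀ i j : Fin 2,
          ‖(gGauge w γ z * PsiBig w γ z * (gGauge w γ z)⁻¹ - PhiSmall u z) i j‖
            < ε := by
  intro ε hε
  have hlim := (tendsto_gGauge_mul_PsiBig_mul_inv u z).sub_const (PhiSmall u z)
  rw [sub_self] at hlim
  have hsmall : ∀ᶠ p in curveAtInfty u, ∀ i j : Fin 2,
      ‖(gGauge p.1 p.2 z * PsiBig p.1 p.2 z * (gGauge p.1 p.2 z)⁻¹ - PhiSmall u z) i j‖ < ε := by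
    simp only [eventually_all]
    intro i j
    simpa using Metric.tendsto_nhds.1 (tendsto_pi_nhds.1 (tendsto_pi_nhds.1 hlim i) j) ε hε
  obtain ⟨R, hR⟩ := (curveAtInfty.eventually_iff u).1 hsmall
  exact ⟨max R 1, by positivity, fun w γ hw hγ hu hRw => hR w γ hw hγ hu (le_of_max_le_left hRw)⟩
end
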